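/- In the Figure 12 system under the monotone model, if v₁ updates first (to r_{v₁} = 3/4) the process stabilizes with final recovery rate r_{v₁} = 3/4, whereas if v₂ updates first the forced sequence v₂ → u₁ → w → v₁ ends with r_{v₁} = 1/2. Hence v₁ obtains its highest possible final recovery rate (3/4 > 1/2) only by being the first bank to report a default. -/

import Mathlib

namespace Fig12

/-- The five banks of the Figure 12 system. -/
inductive Bank | v1 | v2 | u1 | u2 | w
deriving DecidableEq

open Bank

/-- A state: the announced recovery rate of each bank. -/
abbrev St := Bank → ℝ

/-- The paper's recovery-rate function: `R(a,l) = 1` if `a ≥ l`, else `a/l` (so `R(a,0)=1`). -/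
noncomputable def Rfun (a l : ℝ) : ℝ := if a ≥ l then 1 else a / l

/-- Assets: `v₁` receives a debt payment of `3 r_w` from `w` and a CDS payment referencing
`v₂`; `v₂` receives a CDS payment of `4(1 − r_{v₁})` referencing `v₁`; `u₁, u₂` have no
assets; `w` has external assets `3/2`. -/
noncomputable def assets (r : St) : Bank → ℝ
  | v1 => 3 * r w + (1 - r v2)
  | v2 => 4 * (1 - r v1)
  | u1 => 0
  | u2 => 0
  | w  => 3/2

/-- Liabilities: `v₁` owes a debt of 4 (so initially `a/l = 3/4`); `v₂` owes a debt of 1;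
`u₁` owes a CDS referencing `v₂`; `u₂` owes a CDS referencing `v₁`; `w` owes a debt of `3/2`
(to `v₁`) plus a CDS of weight 3 referencing `u₁`. -/
noncomputable def liab (r : St) : Bank → ℝ
  | v1 => 4
  | v2 => 1
  | u1 => 1 - r v2
  | u2 => 1 - r v1
  | w  => 3/2 + 3 * (1 - r u1)

/-- Monotone-model updatability: `b` can update iff its new rate `R(a_b, l_b)` is strictly
below its current rate (recovery rates only decrease in the monotone model). -/
noncomputable def updatable (b : Bank) (r : St) : Prop :=
  Rfun (assets r b) (liab r b) < r b

/-- Updating bank `b`. -/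
noncomputable def upd (b : Bank) (r : St) : St :=
  Function.update r b (Rfun (assets r b) (liab r b))

/-- Sequential reachability. -/
inductive Reach : St → St → Prop
  | refl (r) : Reach r r
  | step (r s : St) (b : Bank) : Reach r s → updatable b s → Reach r (upd b s)

/-- The initial state. -/
def init : St := fun _ => 1

end Fig12

/-!
Along each branch exactly one bank is updatable at every step, so the stable state reached is
unique and can be computed. If `v₁` defaults first, `v₂` gains the CDS payment `4 · 1/4 = 1`
and stays solvent, and only `u₂` (which owes that CDS) still moves. If `v₂` defaults first,
`u₁` (owing a CDS on `v₂`) defaults, which raises `w`'s liability to `3/2 + 3 = 9/2`, so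
`r_w = 1/3`; then `v₁`'s assets drop to `3 · 1/3 + 1 = 2` against liability `4`.
-/

namespace Fig12

open Bank

def Stable (s : St) : Prop := ∀ c, ¬ updatable c s

def ForcedStep (s : St) (b : Bank) (s' : St) : Prop :=
  (∀ c, updatable c s ↔ c = b) ∧ upd b s = s'

section Reach

variable {s s' t : St} {b : Bank}

theorem ForcedStep.reach (h : ForcedStep s b s') : Reach s s' :=
  h.2 ▸ .step _ _ _ (.refl s) ((h.1 b).mpr rfl)

theorem Reach.eq_of_stable (hs : Stable s) (h : Reach s t) : t = s := by
  induction h with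
  | refl => rfl
  | step t c _ hc ih => subst ih; exact absurd hc (hs c)

theorem Reach.eq_or_reach_of_forcedStep (hb : ForcedStep s b s') (h : Reach s t) :
    t = s ∨ Reach s' t := by
  induction h with
  | refl => exact .inl rfl
  | step t c _ hc ih =>
    rcases ih with rfl | ih
    · rw [(hb.1 c).mp hc, hb.2]; exact .inr (.refl _)
    · exact .inr (.step _ _ _ ih hc)

theorem Reach.of_forcedStep (hb : ForcedStep s b s') (h : Reach s t) (ht : Stable t) :
    Reach s' t := by
  refine (h.eq_or_reach_of_forcedStep hb).resolve_left ?_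
  rintro rfl
  exact ht b ((hb.1 b).mpr rfl)

end Reach

def rates (x₁ x₂ y₁ y₂ z : ℝ) : St
  | v1 => x₁
  | v2 => x₂
  | u1 => y₁
  | u2 => y₂
  | w => z

theorem updatable_init_iff (b : Bank) : updatable b init ↔ b = v1 ∨ b = v2 := by
  cases b <;> simp only [updatable, init, assets, liab, Rfun, reduceCtorEq] <;> norm_num

theorem upd_v1_init : upd v1 init = rates (3/4) 1 1 1 1 := by
  funext c
  cases c <;>
    simp only [upd, Function.update_apply, init, rates, assets, liab, Rfun, reduceCtorEq] <;>
    norm_num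

theorem upd_v2_init : upd v2 init = rates 1 0 1 1 1 := by
  funext c
  cases c <;>
    simp only [upd, Function.update_apply, init, rates, assets, liab, Rfun, reduceCtorEq] <;>
    norm_num

theorem forcedStep_v1_u2 :
    ForcedStep (rates (3/4) 1 1 1 1) u2 (rates (3/4) 1 1 0 1) := by
  refine ⟨fun c => ?_, funext fun c => ?_⟩ <;> cases c <;>
    simp only [updatable, upd, Function.update_apply, rates, assets, liab, Rfun, reduceCtorEq] <;>
    norm_num

theorem stable_v1_u2 : Stable (rates (3/4) 1 1 0 1) := by
  intro c; cases c <;> simp only [updatable, rates, assets, liab, Rfun] <;> norm_num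

theorem forcedStep_v2_u1 : ForcedStep (rates 1 0 1 1 1) u1 (rates 1 0 0 1 1) := by
  refine ⟨fun c => ?_, funext fun c => ?_⟩ <;> cases c <;>
    simp only [updatable, upd, Function.update_apply, rates, assets, liab, Rfun, reduceCtorEq] <;>
    norm_num

theorem forcedStep_v2_u1_w : ForcedStep (rates 1 0 0 1 1) w (rates 1 0 0 1 (1/3)) := by
  refine ⟨fun c => ?_, funext fun c => ?_⟩ <;> cases c <;>
    simp only [updatable, upd, Function.update_apply, rates, assets, liab, Rfun, reduceCtorEq] <;>
    norm_num

theorem forcedStep_v2_u1_w_v1 :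
    ForcedStep (rates 1 0 0 1 (1/3)) v1 (rates (1/2) 0 0 1 (1/3)) := by
  refine ⟨fun c => ?_, funext fun c => ?_⟩ <;> cases c <;>
    simp only [updatable, upd, Function.update_apply, rates, assets, liab, Rfun, reduceCtorEq] <;>
    norm_num

theorem forcedStep_v2_u1_w_v1_u2 :
    ForcedStep (rates (1/2) 0 0 1 (1/3)) u2 (rates (1/2) 0 0 0 (1/3)) := by
  refine ⟨fun c => ?_, funext fun c => ?_⟩ <;> cases c <;>
    simp only [updatable, upd, Function.update_apply, rates, assets, liab, Rfun, reduceCtorEq] <;>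
    norm_num

theorem stable_v2_u1_w_v1_u2 : Stable (rates (1/2) 0 0 0 (1/3)) := by
  intro c; cases c <;> simp only [updatable, rates, assets, liab, Rfun] <;> norm_num

end Fig12

open Fig12 Fig12.Bank in
/-- in the Figure 12 system under the monotone model, initially only `v₁` and
`v₂` are updatable; if `v₁` updates first (to `r_{v₁} = 3/4`) every reachable stable state
has final rate `r_{v₁} = 3/4` (and the process does stabilize), whereas if `v₂` updates
first the forced sequence `v₂ → u₁ → w → v₁` (exactly the indicated bank updatable at each
step) ends with `r_{v₁} = 1/2`, and every stable state reachable in that branch has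
`r_{v₁} = 1/2`.  Hence `v₁` obtains its highest final recovery rate (`3/4 > 1/2`) only by
being the first bank to report a default. -/
theorem stmt19 :
    (∀ b, updatable b init ↔ (b = v1 ∨ b = v2)) ∧
    upd v1 init v1 = 3/4 ∧
    (∀ s, Reach (upd v1 init) s → (∀ b, ¬ updatable b s) → s v1 = 3/4) ∧
    (∃ s, Reach (upd v1 init) s ∧ ∀ b, ¬ updatable b s) ∧
    (∀ b, updatable b (upd v2 init) ↔ b = u1) ∧
    (∀ b, updatable b (upd u1 (upd v2 init)) ↔ b = w) ∧
    (∀ b, updatable b (upd w (upd u1 (upd v2 init))) ↔ b = v1) ∧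
    upd v1 (upd w (upd u1 (upd v2 init))) v1 = 1/2 ∧
    (∀ s, Reach (upd v2 init) s → (∀ b, ¬ updatable b s) → s v1 = 1/2) ∧
    (1/2 : ℝ) < 3/4 := by
  have hB₁ := forcedStep_v2_u1
  have hB₂ := forcedStep_v2_u1_w
  have hB₃ := forcedStep_v2_u1_w_v1
  have hB₄ := forcedStep_v2_u1_w_v1_u2
  rw [upd_v1_init, upd_v2_init, hB₁.2, hB₂.2, hB₃.2]
  refine ⟨updatable_init_iff, rfl, ?_, ⟨_, forcedStep_v1_u2.reach, stable_v1_u2⟩,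
    hB₁.1, hB₂.1, hB₃.1, rfl, ?_, by norm_num⟩
  · intro s hs hst
    rw [(hs.of_forcedStep forcedStep_v1_u2 hst).eq_of_stable stable_v1_u2]
    rfl
  · intro s hs hst
    have hs' := (((hs.of_forcedStep hB₁ hst).of_forcedStep hB₂ hst).of_forcedStep hB₃ hst)
    rw [(hs'.of_forcedStep hB₄ hst).eq_of_stable stable_v2_u1_w_v1_u2]
    rfl
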